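/- Every lattice point of the cone C is a sum of the nine generating vectors with nonnegative integer coefficients; that is, C ∩ ℤ¹⁰ equals the additive submonoid of ℤ¹⁰ generated by g_X, g_S, g_T, g₁₂, g₂₃, g₃₁, g₂₁, g₃₂, g₁₃ (the cone is a normal affine semigroup generated in level 1). -/

import Mathlib

/-- The nine generators `g_X, g_S, g_T, g₁₂, g₂₃, g₃₁, g₂₁, g₃₂, g₁₃` of the
trinode cone in `ℤ¹⁰ = ℤ⁹ × ℤ` (first nine coordinates ordered
`(a₁,b₁,c₁,a₂,a₃,b₂,b₃,c₂,c₃)`, last coordinate the level). -/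
def cbGens : Fin 9 → Fin 10 → ℤ :=
  ![![0, 0, 0, 0, 0, 0, 0, 0, 0, 1],  -- g_X
    ![0, 0, 0, 1, 0, 1, 0, 1, 0, 1],  -- g_S
    ![0, 0, 0, 0, 1, 0, 1, 0, 1, 1],  -- g_T
    ![0, 0, 0, 1, 0, 0, 1, 0, 0, 1],  -- g₁₂
    ![0, 0, 0, 0, 0, 1, 0, 0, 1, 1],  -- g₂₃
    ![0, 0, 0, 0, 1, 0, 0, 1, 0, 1],  -- g₃₁
    ![0, 1, 0, 0, 0, 0, 0, 0, 0, 1],  -- g₂₁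
    ![0, 0, 1, 0, 0, 0, 0, 0, 0, 1],  -- g₃₂
    ![1, 0, 0, 0, 0, 0, 0, 0, 0, 1]]  -- g₁₃

/-- The real versions of the nine generators. -/
noncomputable def cbGensR (i : Fin 9) : Fin 10 → ℝ := fun t => (cbGens i t : ℝ)

/-- The polyhedral cone `C ⊆ ℝ¹⁰` generated by the nine vectors, i.e. the set of
their linear combinations with nonnegative real coefficients. -/
def coneC : Set (Fin 10 → ℝ) :=
  {y | ∃ c : Fin 9 → ℝ, (∀ i, 0 ≤ c i) ∧ y = ∑ i : Fin 9, c i • cbGensR i}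

/-! The nine generators satisfy a single linear relation, `g_X + g_S + g_T = g₁₂ + g₂₃ + g₃₁`,
and once the coefficient `u` of `g₁₂` is fixed, the coefficients of any representation of `x`
are affine functions of `x` and `u` with integer coefficients. Given a representation with
nonnegative real coefficients, replace `u` by `⌊u⌋`: this moves along the relation by the
fractional part of `u`, raising the coefficients of `g_X, g_S, g_T`, lowering those of
`g₁₂, g₂₃, g₃₁` by less than one and keeping the corner ones. The new coefficients are integers
greater than `-1`, hence natural numbers. -/

open Matrix

lemma vecMul_cbGens {R : Type*} [CommRing R] (c : Fin 9 → R) :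
    c ᵥ* Matrix.map cbGens Int.cast = ![c 8, c 6, c 7, c 1 + c 3, c 2 + c 5, c 1 + c 4,
      c 2 + c 3, c 1 + c 5, c 2 + c 4, ∑ i, c i] := by
  funext j
  simp only [vecMul, dotProduct, Fin.sum_univ_succ, Fin.sum_univ_zero]
  fin_cases j <;> simp [cbGens, Matrix.map]

/-- The coefficients of `g_X, g_S, g_T, g₁₂, g₂₃, g₃₁, g₂₁, g₃₂, g₁₃` in the representation of `x`
whose coefficient of `g₁₂` is `u`. -/
def cbCoeffs {R : Type*} [CommRing R] (x : Fin 10 → R) (u : R) : Fin 9 → R :=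
  ![x 9 - (x 0 + x 1 + x 2 + x 5 + x 6 + x 7 - x 3 + u), x 3 - u, x 6 - u, u,
    u - x 3 + x 5, u - x 3 + x 7, x 1, x 2, x 0]

lemma intCast_cbCoeffs {R : Type*} [CommRing R] (x : Fin 10 → ℤ) (u : ℤ) (i : Fin 9) :
    ((cbCoeffs x u i : ℤ) : R) = cbCoeffs (fun t => (x t : R)) u i := by
  fin_cases i <;> simp [cbCoeffs]

lemma eq_cbCoeffs_of_vecMul_eq {R : Type*} [CommRing R] {c : Fin 9 → R} {x : Fin 10 → R}
    (h : c ᵥ* Matrix.map cbGens Int.cast = x) : c = cbCoeffs x (c 3) := by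
  subst h
  rw [vecMul_cbGens]
  funext i
  fin_cases i <;> simp [cbCoeffs, Fin.sum_univ_succ]
  ring

lemma cbCoeffs_vecMul_of_vecMul_eq {R : Type*} [CommRing R] {c : Fin 9 → R} {x : Fin 10 → R}
    (h : c ᵥ* Matrix.map cbGens Int.cast = x) (u : R) :
    cbCoeffs x u ᵥ* Matrix.map cbGens Int.cast = x := by
  subst h
  rw [vecMul_cbGens, vecMul_cbGens]
  funext j
  fin_cases j <;> simp [cbCoeffs, Fin.sum_univ_succ] <;> ring

theorem exists_nat_coeffs_of_mem_coneC {x : Fin 10 → ℤ} (hx : (fun t => (x t : ℝ)) ∈ coneC) :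
    ∃ n : Fin 9 → ℕ, x = ∑ i, (n i : ℤ) • cbGens i := by
  obtain ⟨c, hc, hcx⟩ := hx
  have hcx' : c ᵥ* Matrix.map cbGens Int.cast = fun t => (x t : ℝ) := by
    rw [vecMul_eq_sum]; exact hcx.symm
  set M := ⌊c 3⌋
  have hm : ∀ i, 0 ≤ cbCoeffs x M i := by
    intro i
    have hci := eq_cbCoeffs_of_vecMul_eq hcx' ▸ hc i
    suffices (-1 : ℝ) < cbCoeffs x M i by
      have : (-1 : ℤ) < cbCoeffs x M i := by exact_mod_cast this
      omega
    rw [intCast_cbCoeffs]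
    generalize (fun t => (x t : ℝ)) = y at hci
    fin_cases i <;> simp [cbCoeffs] at hci ⊢ <;>
      linarith [Int.floor_le (c 3), Int.lt_floor_add_one (c 3)]
  have hmx : cbCoeffs x M ᵥ* cbGens = x := by
    funext j
    apply Int.cast_injective (α := ℝ)
    have := RingHom.map_vecMul (Int.castRingHom ℝ) cbGens (cbCoeffs x M) j
    simp only [Int.coe_castRingHom] at this
    rw [this, show Int.cast ∘ cbCoeffs x M = cbCoeffs (fun t => (x t : ℝ)) M from
      funext (intCast_cbCoeffs x M), cbCoeffs_vecMul_of_vecMul_eq hcx']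
  refine ⟨fun i => (cbCoeffs x M i).toNat, ?_⟩
  simp only [Int.toNat_of_nonneg (hm _)]
  conv_lhs => rw [← hmx]
  exact vecMul_eq_sum _ _

lemma intCast_sum_smul_cbGens_mem_coneC (n : Fin 9 → ℕ) :
    (fun t => ((∑ i, (n i : ℤ) • cbGens i) t : ℝ)) ∈ coneC :=
  ⟨fun i => n i, fun i => Nat.cast_nonneg _, by funext t; simp [Finset.sum_apply, cbGensR]⟩

theorem stmt_7 (x : Fin 10 → ℤ) :
    ((fun t => (x t : ℝ)) ∈ coneC) ↔
      ∃ n : Fin 9 → ℕ, x = ∑ i : Fin 9, (n i : ℤ) • cbGens i := by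
  refine ⟨exists_nat_coeffs_of_mem_coneC, ?_⟩
  rintro ⟨n, rfl⟩
  exact intCast_sum_smul_cbGens_mem_coneC n
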